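/- arXiv:1710.06276 — 7 statements merged into one kernel-verified Lean document; each statement's English description precedes it below -/
import Mathlib

section
/- For any T ∈ U(a,b), the squared Frobenius norm satisfies ∑_{i,j} (a_i/n + b_j/m - 1/(mn))² ≤ ‖T‖² ≤ min{‖a‖², ‖b‖²}. -/
open Finset

theorem sq_norm_coupling_bounds {m n : ℕ} (hm : 0 < m) (hn : 0 < n)
    (a : Fin m → ℝ) (b : Fin n → ℝ) (T : Matrix (Fin m) (Fin n) ℝ)
    (ha0 : ∀ i, 0 ≤ a i) (ha1 : ∑ i, a i = 1)
    (hb0 : ∀ j, 0 ≤ b j) (hb1 : ∑ j, b j = 1)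
    (hT0 : ∀ i j, 0 ≤ T i j)
    (hrow : ∀ i, ∑ j, T i j = a i)
    (hcol : ∀ j, ∑ i, T i j = b j) :
    ∑ i, ∑ j, (a i / n + b j / m - 1 / (m * n)) ^ 2 ≤ ∑ i, ∑ j, (T i j) ^ 2 ∧
      ∑ i, ∑ j, (T i j) ^ 2 ≤ min (∑ i, (a i) ^ 2) (∑ j, (b j) ^ 2) := by
  have hn' : (n : ℝ) ≠ 0 := Nat.cast_ne_zero.mpr hn.ne'
  have hm' : (m : ℝ) ≠ 0 := Nat.cast_ne_zero.mpr hm.ne'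
  set W : Matrix (Fin m) (Fin n) ℝ :=
    fun i j => a i / n + b j / m - 1 / (m * n) with hW
  have hWrow : ∀ i, ∑ j, W i j = a i := by
    intro i
    simp only [hW, Finset.sum_sub_distrib, Finset.sum_add_distrib, Finset.sum_const,
      Finset.card_univ, Fintype.card_fin, nsmul_eq_mul, ← Finset.sum_div, hb1]
    field_simp
    ring
  have hWcol : ∀ j, ∑ i, W i j = b j := by
    intro j
    simp only [hW, Finset.sum_sub_distrib, Finset.sum_add_distrib, Finset.sum_const,
      Finset.card_univ, Fintype.card_fin, nsmul_eq_mul, ← Finset.sum_div, ha1]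
    field_simp
    ring
  -- key cross-product computation
  have key : ∀ S : Matrix (Fin m) (Fin n) ℝ, (∀ i, ∑ j, S i j = a i) →
      (∀ j, ∑ i, S i j = b j) →
      ∑ i, ∑ j, W i j * S i j
        = (∑ i, (a i)^2) / n + (∑ j, (b j)^2) / m - 1 / (m * n) := by
    intro S hSr hSc
    have step : ∀ i, ∑ j, W i j * S i j
        = (a i / n - 1 / (m * n)) * a i + ∑ j, (b j / m) * S i j := by
      intro i
      calc ∑ j, W i j * S i j
          = ∑ j, ((a i / n - 1 / (m * n)) * S i j + (b j / m) * S i j) := by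
            refine Finset.sum_congr rfl fun j _ => ?_; simp only [hW]; ring
        _ = (a i / n - 1 / (m * n)) * ∑ j, S i j + ∑ j, (b j / m) * S i j := by
            rw [Finset.sum_add_distrib, Finset.mul_sum]
        _ = _ := by rw [hSr]
    calc ∑ i, ∑ j, W i j * S i j
        = ∑ i, (a i / n - 1 / (m * n)) * a i + ∑ i, ∑ j, (b j / m) * S i j := by
          rw [← Finset.sum_add_distrib]; exact Finset.sum_congr rfl fun i _ => step i
      _ = ∑ i, (a i / n - 1 / (m * n)) * a i + ∑ j, (b j / m) * b j := by
          rw [Finset.sum_comm]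
          congr 1
          refine Finset.sum_congr rfl fun j _ => ?_
          rw [← Finset.mul_sum, hSc]
      _ = (∑ i, (a i)^2) / n + (∑ j, (b j)^2) / m - 1 / (m * n) := by
          have h1 : ∑ i, (a i / n - 1 / (m * n)) * a i
              = (∑ i, (a i)^2) / n - (1 / (m * n)) * ∑ i, a i := by
            rw [Finset.mul_sum, Finset.sum_div, ← Finset.sum_sub_distrib]
            exact Finset.sum_congr rfl fun i _ => by ring
          have h2 : ∑ j, (b j / m) * b j = (∑ j, (b j)^2) / m := by
            rw [Finset.sum_div]; exact Finset.sum_congr rfl fun j _ => by ring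
          rw [h1, h2, ha1]; ring
  have kT := key T hrow hcol
  have kW := key W hWrow hWcol
  constructor
  · -- lower bound
    have hexp : ∑ i, ∑ j, (T i j - W i j) ^ 2
        = ∑ i, ∑ j, (T i j)^2 - 2 * (∑ i, ∑ j, W i j * T i j)
          + ∑ i, ∑ j, W i j * W i j := by
      rw [Finset.mul_sum, ← Finset.sum_sub_distrib, ← Finset.sum_add_distrib]
      refine Finset.sum_congr rfl fun i _ => ?_
      rw [Finset.mul_sum, ← Finset.sum_sub_distrib, ← Finset.sum_add_distrib]
      exact Finset.sum_congr rfl fun j _ => by ring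
    have hnonneg : 0 ≤ ∑ i, ∑ j, (T i j - W i j) ^ 2 :=
      Finset.sum_nonneg fun i _ => Finset.sum_nonneg fun j _ => sq_nonneg _
    have hWsq : ∑ i, ∑ j, W i j * W i j = ∑ i, ∑ j, (W i j)^2 :=
      Finset.sum_congr rfl fun i _ => Finset.sum_congr rfl fun j _ => (sq (W i j)).symm ▸ by ring
    have hWval : ∑ i, ∑ j, (W i j)^2
        = (∑ i, (a i)^2) / n + (∑ j, (b j)^2) / m - 1 / (m * n) := by
      rw [← hWsq]; exact kW
    have : ∑ i, ∑ j, (W i j)^2 ≤ ∑ i, ∑ j, (T i j)^2 := by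
      rw [hexp, kT, kW] at hnonneg
      linarith
    simpa [hW] using this
  · -- upper bound
    have hsq : ∀ (k : ℕ) (f : Fin k → ℝ), (∀ j, 0 ≤ f j) →
        ∑ j, (f j)^2 ≤ (∑ j, f j)^2 := by
      intro k f hf
      rw [sq (∑ j, f j), Finset.sum_mul]
      refine Finset.sum_le_sum fun j _ => ?_
      rw [sq]
      exact mul_le_mul_of_nonneg_left
        (Finset.single_le_sum (fun i _ => hf i) (Finset.mem_univ j)) (hf j)
    refine le_min ?_ ?_
    · refine Finset.sum_le_sum fun i _ => ?_
      rw [← hrow i]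
      exact hsq n (T i) (hT0 i)
    · rw [Finset.sum_comm]
      refine Finset.sum_le_sum fun j _ => ?_
      rw [← hcol j]
      exact hsq m (fun i => T i j) (fun i => hT0 i j)
end

section
/- For entropic regularization Ω(y) = γ ∑_i y_i log y_i applied column-wise, the regularized OT value satisfies -γ(H(a)+H(b)) ≤ OT_Ω(a,b) - OT(a,b) ≤ -γ max{H(a), H(b)}. -/
open Finset Real

/-- Entropy of a vector -/
noncomputable def vecEntropy {m : ℕ} (a : Fin m → ℝ) : ℝ :=
  ∑ i, Real.negMulLog (a i)

lemma xlogx_sum_le {n : ℕ} (x : Fin n → ℝ) (hx : ∀ j, 0 ≤ x j) :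
    ∑ j, x j * Real.log (x j) ≤ (∑ j, x j) * Real.log (∑ j, x j) := by
  set S := ∑ j, x j with hS
  have key : ∀ j ∈ Finset.univ, x j * Real.log (x j) ≤ x j * Real.log S := by
    intro j _
    rcases eq_or_lt_of_le (hx j) with h | h
    · simp [← h]
    · have hle : x j ≤ S := Finset.single_le_sum (fun k _ => hx k) (Finset.mem_univ j)
      exact mul_le_mul_of_nonneg_left (Real.log_le_log h hle) (hx j)
  calc ∑ j, x j * Real.log (x j) ≤ ∑ j, x j * Real.log S := Finset.sum_le_sum key
    _ = S * Real.log S := by rw [← Finset.sum_mul]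

/-- marginal entropy ≤ joint entropy (row version) -/
lemma marginal_le_joint {m n : ℕ} (T : Matrix (Fin m) (Fin n) ℝ)
    (hT0 : ∀ i j, 0 ≤ T i j) :
    ∑ i, Real.negMulLog (∑ j, T i j) ≤ ∑ i, ∑ j, Real.negMulLog (T i j) := by
  apply Finset.sum_le_sum
  intro i _
  have h1 := xlogx_sum_le (fun j => T i j) (fun j => hT0 i j)
  have h2 : ∑ j, Real.negMulLog (T i j) = -∑ j, T i j * Real.log (T i j) := by
    simp [Real.negMulLog]
  have h3 : Real.negMulLog (∑ j, T i j) = -((∑ j, T i j) * Real.log (∑ j, T i j)) := by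
    rw [Real.negMulLog]; ring
  rw [h2, h3]
  exact neg_le_neg h1

/-- joint entropy ≤ sum of marginal entropies (subadditivity) -/
lemma joint_le_sum_marginals {m n : ℕ} (T : Matrix (Fin m) (Fin n) ℝ)
    (a : Fin m → ℝ) (b : Fin n → ℝ)
    (hT0 : ∀ i j, 0 ≤ T i j) (hrow : ∀ i, ∑ j, T i j = a i)
    (hcol : ∀ j, ∑ i, T i j = b j)
    (ha1 : ∑ i, a i = 1) (hb1 : ∑ j, b j = 1) :
    ∑ i, ∑ j, Real.negMulLog (T i j) ≤ vecEntropy a + vecEntropy b := by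
  have ha0 : ∀ i, 0 ≤ a i := fun i => (hrow i) ▸ Finset.sum_nonneg (fun j _ => hT0 i j)
  have hb0 : ∀ j, 0 ≤ b j := fun j => (hcol j) ▸ Finset.sum_nonneg (fun i _ => hT0 i j)
  -- pointwise Gibbs bound
  have key : ∀ i j, Real.negMulLog (T i j) + T i j * Real.log (a i)
      + T i j * Real.log (b j) ≤ a i * b j - T i j := by
    intro i j
    rcases eq_or_lt_of_le (hT0 i j) with h | h
    · simp [← h, Real.negMulLog]
      exact mul_nonneg (ha0 i) (hb0 j)
    · have hai : 0 < a i := lt_of_lt_of_le h ((hrow i) ▸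
        Finset.single_le_sum (fun k _ => hT0 i k) (Finset.mem_univ j))
      have hbj : 0 < b j := lt_of_lt_of_le h ((hcol j) ▸
        Finset.single_le_sum (fun k _ => hT0 k j) (Finset.mem_univ i))
      have hlog : Real.log (a i * b j / T i j) ≤ a i * b j / T i j - 1 :=
        Real.log_le_sub_one_of_pos (by positivity)
      have hmul := mul_le_mul_of_nonneg_left hlog (hT0 i j)
      rw [Real.log_div (by positivity) h.ne', Real.log_mul hai.ne' hbj.ne'] at hmul
      have : T i j * (a i * b j / T i j) = a i * b j := by field_simp
      rw [Real.negMulLog]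
      nlinarith [hmul]
  have hsum : ∑ i, ∑ j, (Real.negMulLog (T i j) + T i j * Real.log (a i)
      + T i j * Real.log (b j)) ≤ ∑ i, ∑ j, (a i * b j - T i j) :=
    Finset.sum_le_sum (fun i _ => Finset.sum_le_sum (fun j _ => key i j))
  have hrhs : ∑ i, ∑ j, (a i * b j - T i j) = 0 := by
    have : ∑ i, ∑ j, a i * b j = 1 := by
      simp only [← Finset.mul_sum, hb1, mul_one, ha1]
    have hT1 : ∑ i, ∑ j, T i j = 1 := by
      simp only [hrow, ha1]
    simp [Finset.sum_sub_distrib, this, hT1]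
  have hA : ∑ i, ∑ j, T i j * Real.log (a i) = -vecEntropy a := by
    simp only [vecEntropy, Real.negMulLog]
    rw [← Finset.sum_neg_distrib]
    congr 1; ext i
    rw [← Finset.sum_mul, hrow]; ring
  have hB : ∑ i, ∑ j, T i j * Real.log (b j) = -vecEntropy b := by
    rw [Finset.sum_comm]
    simp only [vecEntropy, Real.negMulLog]
    rw [← Finset.sum_neg_distrib]
    congr 1; ext j
    rw [← Finset.sum_mul, hcol]; ring
  have hexp : ∑ i, ∑ j, (Real.negMulLog (T i j) + T i j * Real.log (a i)
      + T i j * Real.log (b j)) = (∑ i, ∑ j, Real.negMulLog (T i j))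
      + (∑ i, ∑ j, T i j * Real.log (a i)) + (∑ i, ∑ j, T i j * Real.log (b j)) := by
    simp [Finset.sum_add_distrib]
  rw [hexp, hA, hB, hrhs] at hsum
  linarith

theorem entropic_reg_approx_error {m n : ℕ}
    (a : Fin m → ℝ) (b : Fin n → ℝ) (C : Matrix (Fin m) (Fin n) ℝ) (γ : ℝ)
    (hγ : 0 < γ)
    (ha0 : ∀ i, 0 ≤ a i) (ha1 : ∑ i, a i = 1)
    (hb0 : ∀ j, 0 ≤ b j) (hb1 : ∑ j, b j = 1)
    (hC : ∀ i j, 0 ≤ C i j)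
    (Tstar TΩ : Matrix (Fin m) (Fin n) ℝ)
    (hTs : (∀ i j, 0 ≤ Tstar i j) ∧ (∀ i, ∑ j, Tstar i j = a i) ∧
      (∀ j, ∑ i, Tstar i j = b j))
    (hTΩ : (∀ i j, 0 ≤ TΩ i j) ∧ (∀ i, ∑ j, TΩ i j = a i) ∧
      (∀ j, ∑ i, TΩ i j = b j))
    (hTsMin : ∀ T : Matrix (Fin m) (Fin n) ℝ,
      (∀ i j, 0 ≤ T i j) → (∀ i, ∑ j, T i j = a i) → (∀ j, ∑ i, T i j = b j) →
      ∑ i, ∑ j, Tstar i j * C i j ≤ ∑ i, ∑ j, T i j * C i j)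
    (hTΩMin : ∀ T : Matrix (Fin m) (Fin n) ℝ,
      (∀ i j, 0 ≤ T i j) → (∀ i, ∑ j, T i j = a i) → (∀ j, ∑ i, T i j = b j) →
      (∑ i, ∑ j, TΩ i j * C i j) + γ * ∑ i, ∑ j, TΩ i j * Real.log (TΩ i j) ≤
        (∑ i, ∑ j, T i j * C i j) + γ * ∑ i, ∑ j, T i j * Real.log (T i j)) :
    -γ * (vecEntropy a + vecEntropy b) ≤
      ((∑ i, ∑ j, TΩ i j * C i j) + γ * ∑ i, ∑ j, TΩ i j * Real.log (TΩ i j)) -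
        ∑ i, ∑ j, Tstar i j * C i j ∧
    ((∑ i, ∑ j, TΩ i j * C i j) + γ * ∑ i, ∑ j, TΩ i j * Real.log (TΩ i j)) -
        ∑ i, ∑ j, Tstar i j * C i j ≤
      -γ * max (vecEntropy a) (vecEntropy b) := by
  obtain ⟨hTs0, hTsr, hTsc⟩ := hTs
  obtain ⟨hTΩ0, hTΩr, hTΩc⟩ := hTΩ
  have hneg : ∀ (T : Matrix (Fin m) (Fin n) ℝ),
      ∑ i, ∑ j, T i j * Real.log (T i j) = -∑ i, ∑ j, Real.negMulLog (T i j) := by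
    intro T
    simp [Real.negMulLog, Finset.sum_neg_distrib]
  constructor
  · -- lower bound
    have hE : ∑ i, ∑ j, Tstar i j * C i j ≤ ∑ i, ∑ j, TΩ i j * C i j :=
      hTsMin TΩ hTΩ0 hTΩr hTΩc
    have hH : ∑ i, ∑ j, Real.negMulLog (TΩ i j) ≤ vecEntropy a + vecEntropy b :=
      joint_le_sum_marginals TΩ a b hTΩ0 hTΩr hTΩc ha1 hb1
    have := mul_le_mul_of_nonneg_left hH hγ.le
    rw [hneg TΩ]
    nlinarith
  · -- upper bound
    have h := hTΩMin Tstar hTs0 hTsr hTsc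
    have hHa : vecEntropy a ≤ ∑ i, ∑ j, Real.negMulLog (Tstar i j) := by
      have := marginal_le_joint Tstar hTs0
      simpa [vecEntropy, hTsr] using this
    have hHb : vecEntropy b ≤ ∑ i, ∑ j, Real.negMulLog (Tstar i j) := by
      have hh := marginal_le_joint (Matrix.of fun j i => Tstar i j) (fun j i => hTs0 i j)
      rw [Finset.sum_comm]
      simpa [vecEntropy, hTsc] using hh
    have hS : ∑ i, ∑ j, Tstar i j * Real.log (Tstar i j) ≤
        -(max (vecEntropy a) (vecEntropy b)) := by
      rw [hneg Tstar]
      exact neg_le_neg (max_le hHa hHb)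
    have hS2 := mul_le_mul_of_nonneg_left hS hγ.le
    nlinarith
end

section
/- For squared 2-norm regularization Ω(y) = (γ/2)‖y‖², the regularized OT value satisfies (γ/2)∑_{i,j}(a_i/n + b_j/m - 1/(mn))² ≤ OT_Ω(a,b) - OT(a,b) ≤ (γ/2) min{‖a‖², ‖b‖²}. -/
open Finset

lemma inner_marg {m n : ℕ} (hm : (m:ℝ) ≠ 0) (hn : (n:ℝ) ≠ 0)
    (a : Fin m → ℝ) (b : Fin n → ℝ) (ha1 : ∑ i, a i = 1)
    (T : Matrix (Fin m) (Fin n) ℝ)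
    (hr : ∀ i, ∑ j, T i j = a i) (hc : ∀ j, ∑ i, T i j = b j) :
    ∑ i, ∑ j, (a i / n + b j / m - 1 / (m * n)) * T i j
      = ∑ i, (a i)^2 / n + ∑ j, (b j)^2 / m - 1 / (m * n) := by
  have hTT : ∑ i, ∑ j, T i j = 1 := by simp_rw [hr]; exact ha1
  have h1 : ∑ i, ∑ j, (a i / n) * T i j = ∑ i, (a i)^2 / n := by
    refine Finset.sum_congr rfl fun i _ => ?_
    rw [← Finset.mul_sum, hr]; ring
  have h2 : ∑ i, ∑ j, (b j / m) * T i j = ∑ j, (b j)^2 / m := by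
    rw [Finset.sum_comm]
    refine Finset.sum_congr rfl fun j _ => ?_
    rw [← Finset.mul_sum, hc]; ring
  have h3 : ∑ i, ∑ j, (1 / ((m:ℝ) * n)) * T i j = 1 / (m * n) := by
    simp_rw [← Finset.mul_sum]
    rw [hTT, mul_one]
  calc ∑ i, ∑ j, (a i / n + b j / m - 1 / (m * n)) * T i j
      = ∑ i, ∑ j, ((a i / n) * T i j + (b j / m) * T i j
          - (1 / ((m:ℝ) * n)) * T i j) := by
        refine Finset.sum_congr rfl fun i _ => Finset.sum_congr rfl fun j _ => ?_; ring
    _ = ∑ i, (a i)^2 / n + ∑ j, (b j)^2 / m - 1 / (m * n) := by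
        simp_rw [Finset.sum_sub_distrib, Finset.sum_add_distrib, h1, h2, h3]

lemma proj_le {m n : ℕ} (hm : (m:ℝ) ≠ 0) (hn : (n:ℝ) ≠ 0)
    (a : Fin m → ℝ) (b : Fin n → ℝ) (ha1 : ∑ i, a i = 1) (hb1 : ∑ j, b j = 1)
    (T : Matrix (Fin m) (Fin n) ℝ)
    (hr : ∀ i, ∑ j, T i j = a i) (hc : ∀ j, ∑ i, T i j = b j) :
    ∑ i, ∑ j, (a i / n + b j / m - 1 / (m * n)) ^ 2 ≤ ∑ i, ∑ j, (T i j) ^ 2 := by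
  set P : Matrix (Fin m) (Fin n) ℝ := fun i j => a i / n + b j / m - 1 / (m * n) with hP
  have hPr : ∀ i, ∑ j, P i j = a i := by
    intro i
    simp only [hP, Finset.sum_sub_distrib, Finset.sum_add_distrib, Finset.sum_const,
      Finset.card_univ, Fintype.card_fin, nsmul_eq_mul]
    rw [← Finset.sum_div, hb1]
    field_simp
    ring
  have hPc : ∀ j, ∑ i, P i j = b j := by
    intro j
    simp only [hP, Finset.sum_sub_distrib, Finset.sum_add_distrib, Finset.sum_const,
      Finset.card_univ, Fintype.card_fin, nsmul_eq_mul]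
    rw [← Finset.sum_div, ha1]
    field_simp
    ring
  have hPT := inner_marg hm hn a b ha1 T hr hc
  have hPP := inner_marg hm hn a b ha1 P hPr hPc
  have hsq : (0:ℝ) ≤ ∑ i, ∑ j, (T i j - P i j) ^ 2 :=
    Finset.sum_nonneg fun i _ => Finset.sum_nonneg fun j _ => sq_nonneg _
  have hexp1 : ∑ i, ∑ j, ((T i j)^2 - 2*(P i j * T i j) + (P i j * P i j))
      = ∑ i, ∑ j, (T i j - P i j) ^ 2 := by
    refine Finset.sum_congr rfl fun i _ => Finset.sum_congr rfl fun j _ => ?_; ring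
  have hexp2 : ∑ i, ∑ j, ((T i j)^2 - 2*(P i j * T i j) + (P i j * P i j))
      = ∑ i, ∑ j, (T i j)^2 - 2 * ∑ i, ∑ j, (P i j * T i j)
        + ∑ i, ∑ j, (P i j * P i j) := by
    simp_rw [Finset.sum_add_distrib, Finset.sum_sub_distrib, ← Finset.mul_sum]
  have hexp : ∑ i, ∑ j, (T i j - P i j) ^ 2
      = ∑ i, ∑ j, (T i j)^2 - 2 * ∑ i, ∑ j, (P i j * T i j)
        + ∑ i, ∑ j, (P i j * P i j) := by rw [← hexp1, hexp2]
  have hPsq : ∑ i, ∑ j, (P i j)^2 = ∑ i, ∑ j, (P i j * P i j) := by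
    refine Finset.sum_congr rfl fun i _ => Finset.sum_congr rfl fun j _ => ?_; ring
  have : ∑ i, ∑ j, (P i j * T i j) = ∑ i, ∑ j, (P i j * P i j) := by
    rw [hPT, ← hPP]
  have hgoal : ∑ i, ∑ j, (P i j) ^ 2 ≤ ∑ i, ∑ j, (T i j) ^ 2 := by
    nlinarith [hsq, hexp, hPsq, this]
  simpa [hP] using hgoal

lemma sum_sq_le {n : ℕ} (x : Fin n → ℝ) (hx : ∀ j, 0 ≤ x j) :
    ∑ j, (x j)^2 ≤ (∑ j, x j)^2 := by
  have hS : ∀ j, x j ≤ ∑ k, x k := fun j =>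
    Finset.single_le_sum (fun k _ => hx k) (Finset.mem_univ j)
  calc ∑ j, (x j)^2 ≤ ∑ j, x j * (∑ k, x k) := by
        refine Finset.sum_le_sum fun j _ => ?_
        rw [sq]
        exact mul_le_mul_of_nonneg_left (hS j) (hx j)
    _ = (∑ j, x j)^2 := by rw [← Finset.sum_mul, sq]

theorem sq_norm_reg_approx_error {m n : ℕ} (hm : 0 < m) (hn : 0 < n)
    (a : Fin m → ℝ) (b : Fin n → ℝ) (C : Matrix (Fin m) (Fin n) ℝ) (γ : ℝ)
    (hγ : 0 < γ)
    (ha0 : ∀ i, 0 ≤ a i) (ha1 : ∑ i, a i = 1)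
    (hb0 : ∀ j, 0 ≤ b j) (hb1 : ∑ j, b j = 1)
    (hC : ∀ i j, 0 ≤ C i j)
    (Tstar TΩ : Matrix (Fin m) (Fin n) ℝ)
    (hTs : (∀ i j, 0 ≤ Tstar i j) ∧ (∀ i, ∑ j, Tstar i j = a i) ∧
      (∀ j, ∑ i, Tstar i j = b j))
    (hTΩ : (∀ i j, 0 ≤ TΩ i j) ∧ (∀ i, ∑ j, TΩ i j = a i) ∧
      (∀ j, ∑ i, TΩ i j = b j))
    (hTsMin : ∀ T : Matrix (Fin m) (Fin n) ℝ,
      (∀ i j, 0 ≤ T i j) → (∀ i, ∑ j, T i j = a i) → (∀ j, ∑ i, T i j = b j) →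
      ∑ i, ∑ j, Tstar i j * C i j ≤ ∑ i, ∑ j, T i j * C i j)
    (hTΩMin : ∀ T : Matrix (Fin m) (Fin n) ℝ,
      (∀ i j, 0 ≤ T i j) → (∀ i, ∑ j, T i j = a i) → (∀ j, ∑ i, T i j = b j) →
      (∑ i, ∑ j, TΩ i j * C i j) + γ / 2 * ∑ i, ∑ j, (TΩ i j) ^ 2 ≤
        (∑ i, ∑ j, T i j * C i j) + γ / 2 * ∑ i, ∑ j, (T i j) ^ 2) :
    γ / 2 * ∑ i, ∑ j, (a i / n + b j / m - 1 / (m * n)) ^ 2 ≤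
      ((∑ i, ∑ j, TΩ i j * C i j) + γ / 2 * ∑ i, ∑ j, (TΩ i j) ^ 2) -
        ∑ i, ∑ j, Tstar i j * C i j ∧
    ((∑ i, ∑ j, TΩ i j * C i j) + γ / 2 * ∑ i, ∑ j, (TΩ i j) ^ 2) -
        ∑ i, ∑ j, Tstar i j * C i j ≤
      γ / 2 * min (∑ i, (a i) ^ 2) (∑ j, (b j) ^ 2) := by
  obtain ⟨hs0, hsr, hsc⟩ := hTs
  obtain ⟨hΩ0, hΩr, hΩc⟩ := hTΩ
  have hmne : ((m:ℝ)) ≠ 0 := Nat.cast_ne_zero.mpr hm.ne'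
  have hnne : ((n:ℝ)) ≠ 0 := Nat.cast_ne_zero.mpr hn.ne'
  have hγ2 : (0:ℝ) ≤ γ / 2 := by linarith
  constructor
  · have h1 : ∑ i, ∑ j, Tstar i j * C i j ≤ ∑ i, ∑ j, TΩ i j * C i j :=
      hTsMin TΩ hΩ0 hΩr hΩc
    have h2 := proj_le hmne hnne a b ha1 hb1 TΩ hΩr hΩc
    nlinarith [mul_le_mul_of_nonneg_left h2 hγ2]
  · have h1 := hTΩMin Tstar hs0 hsr hsc
    have hrow : ∑ i, ∑ j, (Tstar i j)^2 ≤ ∑ i, (a i)^2 := by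
      refine Finset.sum_le_sum fun i _ => ?_
      calc ∑ j, (Tstar i j)^2 ≤ (∑ j, Tstar i j)^2 := sum_sq_le _ (fun j => hs0 i j)
        _ = (a i)^2 := by rw [hsr]
    have hcol : ∑ i, ∑ j, (Tstar i j)^2 ≤ ∑ j, (b j)^2 := by
      rw [Finset.sum_comm]
      refine Finset.sum_le_sum fun j _ => ?_
      calc ∑ i, (Tstar i j)^2 ≤ (∑ i, Tstar i j)^2 := sum_sq_le _ (fun i => hs0 i j)
        _ = (b j)^2 := by rw [hsc]
    have hmin : ∑ i, ∑ j, (Tstar i j)^2 ≤ min (∑ i, (a i)^2) (∑ j, (b j)^2) :=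
      le_min hrow hcol
    nlinarith [mul_le_mul_of_nonneg_left hmin hγ2]
end

section
/- For x ∈ ℝ^d with x ≥ 0 componentwise, argmin_{y ≥ 0} (1/2)‖y - x‖² + μ‖y‖ equals argmin_{y ∈ ℝ^d} (1/2)‖y - x‖² + μ‖y‖, i.e., the nonnegativity constraint is inactive at the unconstrained minimizer when the data is nonnegative. -/
open Finset

noncomputable def posPart' {d : ℕ} (z : EuclideanSpace ℝ (Fin d)) : EuclideanSpace ℝ (Fin d) :=
  (WithLp.equiv 2 (Fin d → ℝ)).symm (fun i => max (z i) 0)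

lemma posPart'_apply {d : ℕ} (z : EuclideanSpace ℝ (Fin d)) (i : Fin d) :
    posPart' z i = max (z i) 0 := rfl

lemma normsq_eq {d : ℕ} (v : EuclideanSpace ℝ (Fin d)) : ‖v‖ ^ 2 = ∑ i, (v i) ^ 2 := by
  rw [EuclideanSpace.norm_eq, Real.sq_sqrt]
  · simp [Real.norm_eq_abs, sq_abs]
  · positivity

lemma norm_pos_le {d : ℕ} (z : EuclideanSpace ℝ (Fin d)) : ‖posPart' z‖ ≤ ‖z‖ := by
  rw [EuclideanSpace.norm_eq, EuclideanSpace.norm_eq]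
  apply Real.sqrt_le_sqrt
  apply Finset.sum_le_sum
  intro i _
  simp only [posPart'_apply, Real.norm_eq_abs, sq_abs]
  rcases le_or_gt 0 (z i) with h | h
  · rw [max_eq_left h]
  · rw [max_eq_right h.le]; nlinarith

lemma normsq_sub_le {d : ℕ} (x z : EuclideanSpace ℝ (Fin d)) (hx : ∀ i, 0 ≤ x i) :
    ‖posPart' z - x‖ ^ 2 ≤ ‖z - x‖ ^ 2 := by
  rw [normsq_eq, normsq_eq]
  apply Finset.sum_le_sum
  intro i _
  simp only [PiLp.sub_apply, posPart'_apply]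
  rcases le_or_gt 0 (z i) with h | h
  · rw [max_eq_left h]
  · rw [max_eq_right h.le]; nlinarith [hx i]

lemma normsq_sub_lt {d : ℕ} (x z : EuclideanSpace ℝ (Fin d)) (hx : ∀ i, 0 ≤ x i)
    (i0 : Fin d) (h0 : z i0 < 0) : ‖posPart' z - x‖ ^ 2 < ‖z - x‖ ^ 2 := by
  rw [normsq_eq, normsq_eq]
  apply Finset.sum_lt_sum
  · intro i _
    simp only [PiLp.sub_apply, posPart'_apply]
    rcases le_or_gt 0 (z i) with h | h
    · rw [max_eq_left h]
    · rw [max_eq_right h.le]; nlinarith [hx i]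
  · refine ⟨i0, Finset.mem_univ _, ?_⟩
    simp only [PiLp.sub_apply, posPart'_apply, max_eq_right h0.le]
    nlinarith [hx i0]

lemma obj_pos_le {d : ℕ} (μ : ℝ) (hμ : 0 < μ) (x z : EuclideanSpace ℝ (Fin d))
    (hx : ∀ i, 0 ≤ x i) :
    (1 / 2 : ℝ) * ‖posPart' z - x‖ ^ 2 + μ * ‖posPart' z‖ ≤
      (1 / 2 : ℝ) * ‖z - x‖ ^ 2 + μ * ‖z‖ := by
  have h1 := normsq_sub_le x z hx
  have h2 := norm_pos_le z
  nlinarith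

theorem nonneg_constraint_inactive {d : ℕ} (μ : ℝ) (hμ : 0 < μ)
    (x : EuclideanSpace ℝ (Fin d)) (hx : ∀ i, 0 ≤ x i) :
    {y : EuclideanSpace ℝ (Fin d) | (∀ i, 0 ≤ y i) ∧
        ∀ z : EuclideanSpace ℝ (Fin d), (∀ i, 0 ≤ z i) →
          (1 / 2 : ℝ) * ‖y - x‖ ^ 2 + μ * ‖y‖ ≤ (1 / 2 : ℝ) * ‖z - x‖ ^ 2 + μ * ‖z‖} =
      {y : EuclideanSpace ℝ (Fin d) |
        ∀ z : EuclideanSpace ℝ (Fin d),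
          (1 / 2 : ℝ) * ‖y - x‖ ^ 2 + μ * ‖y‖ ≤ (1 / 2 : ℝ) * ‖z - x‖ ^ 2 + μ * ‖z‖} := by
  ext y
  simp only [Set.mem_setOf_eq]
  constructor
  · rintro ⟨hy, hmin⟩ z
    calc (1 / 2 : ℝ) * ‖y - x‖ ^ 2 + μ * ‖y‖
        ≤ (1 / 2 : ℝ) * ‖posPart' z - x‖ ^ 2 + μ * ‖posPart' z‖ :=
          hmin _ (fun i => le_max_right _ _)
      _ ≤ (1 / 2 : ℝ) * ‖z - x‖ ^ 2 + μ * ‖z‖ := obj_pos_le μ hμ x z hx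
  · intro hmin
    have hy : ∀ i, 0 ≤ y i := by
      intro i
      by_contra h
      push_neg at h
      have h1 := normsq_sub_lt x y hx i h
      have h2 := norm_pos_le y
      have h3 := hmin (posPart' y)
      nlinarith
    exact ⟨hy, fun z _ => hmin z⟩
end

section
/- Semi-dual conjugate formula: for Ω strongly convex, the conjugate of OT_Ω(·, b) over the simplex satisfies sup_{a ∈ Δ^m} αᵀa - OT_Ω(a,b) = ∑_j b_j max_{Ω_j}(α - C_{:,j}), where Ω_j(y) = (1/b_j)Ω(b_j y) and max_Ω(x) = sup_{y∈Δ^m} yᵀx - Ω(y). -/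
open Finset

/-- Regularized OT value (as an infimum). -/
noncomputable def OTreg {m n : ℕ} (C : Matrix (Fin m) (Fin n) ℝ)
    (Ω : (Fin m → ℝ) → ℝ) (a : Fin m → ℝ) (b : Fin n → ℝ) : ℝ :=
  sInf {v : ℝ | ∃ T : Matrix (Fin m) (Fin n) ℝ,
    (∀ i j, 0 ≤ T i j) ∧ (∀ i, ∑ j, T i j = a i) ∧ (∀ j, ∑ i, T i j = b j) ∧
    v = (∑ i, ∑ j, T i j * C i j) + ∑ j, Ω (fun i => T i j)}

/-- Smoothed max operator: conjugate of Ω restricted to the simplex. -/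
noncomputable def maxReg {m : ℕ} (Ω : (Fin m → ℝ) → ℝ) (x : Fin m → ℝ) : ℝ :=
  sSup {v : ℝ | ∃ y : Fin m → ℝ, (∀ i, 0 ≤ y i) ∧ (∑ i, y i = 1) ∧
    v = (∑ i, y i * x i) - Ω y}

/-- Sum of sups is at most any bound on sums of choices. -/
lemma sum_sSup_le {ι : Type*} [Fintype ι] [DecidableEq ι] (S : ι → Set ℝ) (K : ℝ)
    (hne : ∀ j, (S j).Nonempty)
    (h : ∀ f : ι → ℝ, (∀ j, f j ∈ S j) → ∑ j, f j ≤ K) :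
    ∑ j, sSup (S j) ≤ K := by
  obtain ⟨f0, hf0⟩ : ∃ f0 : ι → ℝ, ∀ j, f0 j ∈ S j :=
    ⟨fun j => (hne j).choose, fun j => (hne j).choose_spec⟩
  have main : ∀ s : Finset ι, ∀ g : ι → ℝ, (∀ j, g j ∈ S j) →
      (∑ j ∈ s, sSup (S j)) + ∑ j ∈ sᶜ, g j ≤ K := by
    intro s
    induction s using Finset.induction_on with
    | empty =>
      intro g hg
      simpa [Finset.compl_empty] using h g hg
    | @insert a s ha ih =>
      intro g hg
      rw [Finset.sum_insert ha, Finset.compl_insert]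
      have hsup : sSup (S a) ≤ K - ((∑ j ∈ s, sSup (S j)) + ∑ j ∈ sᶜ.erase a, g j) := by
        apply csSup_le (hne a)
        intro v hv
        have hmemupd : ∀ j, Function.update g a v j ∈ S j := by
          intro j
          rcases eq_or_ne j a with rfl | hj
          · simpa using hv
          · simpa [Function.update_of_ne hj] using hg j
        have hih := ih (Function.update g a v) hmemupd
        have hmem : a ∈ sᶜ := Finset.mem_compl.2 ha
        rw [← Finset.add_sum_erase _ _ hmem] at hih
        have h1 : Function.update g a v a = v := Function.update_self a v g
        have h2 : ∑ j ∈ sᶜ.erase a, Function.update g a v j = ∑ j ∈ sᶜ.erase a, g j :=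
          Finset.sum_congr rfl fun j hj =>
            Function.update_of_ne (Finset.ne_of_mem_erase hj) v g
        rw [h1, h2] at hih
        linarith
      linarith
  simpa [Finset.compl_univ] using main Finset.univ f0 hf0

/-- Sup of a positively scaled set. -/
lemma csSup_mul_image (c : ℝ) (hc : 0 < c) (A : Set ℝ) (hA : A.Nonempty)
    (hbdd : BddAbove A) :
    sSup ((fun v => c * v) '' A) = c * sSup A := by
  obtain ⟨B, hB⟩ := hbdd
  have hbddI : BddAbove ((fun v => c * v) '' A) := by
    refine ⟨c * B, ?_⟩
    rintro _ ⟨u, hu, rfl⟩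
    exact mul_le_mul_of_nonneg_left (hB hu) hc.le
  apply le_antisymm
  · apply csSup_le (hA.image _)
    rintro _ ⟨u, hu, rfl⟩
    exact mul_le_mul_of_nonneg_left (le_csSup ⟨B, hB⟩ hu) hc.le
  · have h1 : sSup A ≤ sSup ((fun v => c * v) '' A) / c := by
      apply csSup_le hA
      intro u hu
      rw [le_div_iff₀ hc, mul_comm]
      exact le_csSup hbddI ⟨u, hu, rfl⟩
    calc c * sSup A ≤ c * (sSup ((fun v => c * v) '' A) / c) :=
          mul_le_mul_of_nonneg_left h1 hc.le
      _ = sSup ((fun v => c * v) '' A) := by field_simp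

/-- A convex function on the nonnegative orthant is bounded below on the scaled simplex. -/
lemma omega_lowerBound {m : ℕ} (hm : 0 < m) {Ω : (Fin m → ℝ) → ℝ}
    (hconv : ConvexOn ℝ {y : Fin m → ℝ | ∀ i, 0 ≤ y i} Ω) {c : ℝ} (hc : 0 < c) :
    ∃ L : ℝ, ∀ t : Fin m → ℝ, (∀ i, 0 ≤ t i) → ∑ i, t i = c → L ≤ Ω t := by
  have hmR : (0:ℝ) < (m:ℝ) := by exact_mod_cast hm
  set M : ℝ := ∑ i : Fin m, |Ω (fun k => if k = i then c else 0)| with hM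
  refine ⟨((m:ℝ)+1) * Ω (fun _ => c/(m:ℝ)) - (m:ℝ) * M, ?_⟩
  intro t ht0 htsum
  have htc : ∀ i, t i ≤ c := fun i =>
    htsum ▸ Finset.single_le_sum (fun k _ => ht0 k) (Finset.mem_univ i)
  set w : Fin m → ℝ := fun i => ((m:ℝ)+1) * c / (m:ℝ)^2 - t i / (m:ℝ) with hw
  have hw0 : ∀ i, 0 ≤ w i := by
    intro i
    have h1 : t i ≤ c := htc i
    simp only [hw, sub_nonneg]
    rw [div_le_div_iff₀ hmR (by positivity : (0:ℝ) < (m:ℝ)^2)]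
    nlinarith [mul_le_mul_of_nonneg_right h1 (sq_nonneg (m:ℝ)), mul_pos hmR hc]
  have hwsum : ∑ i, w i = c := by
    simp only [hw]
    rw [Finset.sum_sub_distrib, Finset.sum_const, Finset.card_univ, Fintype.card_fin,
      ← Finset.sum_div, htsum, nsmul_eq_mul]
    field_simp
    ring
  have hwc : ∀ i, w i ≤ c := fun i =>
    hwsum ▸ Finset.single_le_sum (fun k _ => hw0 k) (Finset.mem_univ i)
  have hJ : Ω w ≤ M := by
    have heq : ∑ i : Fin m, (w i / c) • (fun k => if k = i then c else 0 : Fin m → ℝ) = w := by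
      funext k
      rw [Finset.sum_apply]
      simp only [Pi.smul_apply, smul_eq_mul, mul_ite, mul_zero]
      rw [Finset.sum_ite_eq]
      simp only [Finset.mem_univ, if_true]
      field_simp
    have hj := hconv.map_sum_le (t := Finset.univ) (w := fun i => w i / c)
      (p := fun i => (fun k => if k = i then c else 0))
      (fun i _ => div_nonneg (hw0 i) hc.le)
      (by rw [← Finset.sum_div, hwsum]; field_simp)
      (fun i _ => by
        intro k
        dsimp only
        split
        · exact hc.le
        · exact le_refl 0)
    have hj' : Ω (∑ i : Fin m, (w i / c) • (fun k => if k = i then c else 0 : Fin m → ℝ))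
        ≤ ∑ i : Fin m, (w i / c) • Ω (fun k => if k = i then c else 0) := hj
    rw [heq] at hj'
    refine hj'.trans ?_
    apply Finset.sum_le_sum
    intro i _
    have h01 : w i / c ≤ 1 := (div_le_one hc).2 (hwc i)
    have h00 : 0 ≤ w i / c := div_nonneg (hw0 i) hc.le
    calc (w i / c) • Ω (fun k => if k = i then c else 0)
        = (w i / c) * Ω (fun k => if k = i then c else 0) := rfl
      _ ≤ (w i / c) * |Ω (fun k => if k = i then c else 0)| :=
          mul_le_mul_of_nonneg_left (le_abs_self _) h00
      _ ≤ 1 * |Ω (fun k => if k = i then c else 0)| :=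
          mul_le_mul_of_nonneg_right h01 (abs_nonneg _)
      _ = |Ω (fun k => if k = i then c else 0)| := one_mul _
  have hm1 : (0:ℝ) < (m:ℝ)+1 := by positivity
  have hm1ne : ((m:ℝ)+1) ≠ 0 := hm1.ne'
  have hcomb : Ω (fun _ => c / (m:ℝ)) ≤
      ((m:ℝ)/((m:ℝ)+1)) * Ω w + (1/((m:ℝ)+1)) * Ω t := by
    have harg : ((m:ℝ)/((m:ℝ)+1)) • w + (1/((m:ℝ)+1)) • t = fun _ => c / (m:ℝ) := by
      funext i
      simp only [Pi.add_apply, Pi.smul_apply, smul_eq_mul, hw]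
      field_simp
      try ring
    have h := hconv.2 (hw0 : w ∈ {y : Fin m → ℝ | ∀ i, 0 ≤ y i})
      (ht0 : t ∈ {y : Fin m → ℝ | ∀ i, 0 ≤ y i})
      (by positivity : (0:ℝ) ≤ (m:ℝ)/((m:ℝ)+1))
      (by positivity : (0:ℝ) ≤ 1/((m:ℝ)+1))
      (by field_simp)
    rw [harg] at h
    simpa [smul_eq_mul] using h
  have hcomb' : ((m:ℝ)+1) * Ω (fun _ => c/(m:ℝ)) ≤ (m:ℝ) * Ω w + Ω t := by
    have h2 : ((m:ℝ)+1) * (((m:ℝ)/((m:ℝ)+1)) * Ω w + (1/((m:ℝ)+1)) * Ω t)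
        = (m:ℝ) * Ω w + Ω t := by
      field_simp
      try ring
    have h3 := mul_le_mul_of_nonneg_left hcomb hm1.le
    linarith
  have h4 : (m:ℝ) * Ω w ≤ (m:ℝ) * M := mul_le_mul_of_nonneg_left hJ hmR.le
  linarith

/-- The scaled maxReg equals the sup over the scaled simplex. -/
lemma maxReg_scaled {m : ℕ} (hm : 0 < m) (Ω : (Fin m → ℝ) → ℝ) (c : ℝ) (hc : 0 < c)
    (x : Fin m → ℝ)
    (hbdd : BddAbove {v : ℝ | ∃ t : Fin m → ℝ, (∀ i, 0 ≤ t i) ∧ (∑ i, t i = c) ∧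
      v = (∑ i, t i * x i) - Ω t}) :
    c * maxReg (fun y => 1 / c * Ω (c • y)) x
      = sSup {v : ℝ | ∃ t : Fin m → ℝ, (∀ i, 0 ≤ t i) ∧ (∑ i, t i = c) ∧
          v = (∑ i, t i * x i) - Ω t} := by
  have hcne : c ≠ 0 := hc.ne'
  have hmR : (0:ℝ) < (m:ℝ) := by exact_mod_cast hm
  set A : Set ℝ := {v : ℝ | ∃ y : Fin m → ℝ, (∀ i, 0 ≤ y i) ∧ (∑ i, y i = 1) ∧
    v = (∑ i, y i * x i) - 1 / c * Ω (c • y)} with hA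
  have hAne : A.Nonempty := by
    refine ⟨_, fun _ => 1/(m:ℝ), fun i => by positivity, ?_, rfl⟩
    rw [Finset.sum_const, Finset.card_univ, Fintype.card_fin, nsmul_eq_mul]
    field_simp
  have himg : {v : ℝ | ∃ t : Fin m → ℝ, (∀ i, 0 ≤ t i) ∧ (∑ i, t i = c) ∧
      v = (∑ i, t i * x i) - Ω t} = (fun v => c * v) '' A := by
    ext v
    constructor
    · rintro ⟨t, ht0, htsum, rfl⟩
      refine ⟨(∑ i, (t i / c) * x i) - 1 / c * Ω (c • (fun i => t i / c)),
        ⟨fun i => t i / c, fun i => div_nonneg (ht0 i) hc.le,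
          by rw [← Finset.sum_div, htsum]; field_simp, rfl⟩, ?_⟩
      dsimp only
      have hct : c • (fun i => t i / c) = t := by
        funext i
        simp only [Pi.smul_apply, smul_eq_mul]
        field_simp
      rw [hct]
      rw [mul_sub, Finset.mul_sum]
      congr 1
      · refine Finset.sum_congr rfl fun i _ => ?_
        field_simp
        try ring
      · field_simp
    · rintro ⟨u, ⟨y, hy0, hy1, rfl⟩, rfl⟩
      refine ⟨fun i => c * y i, fun i => mul_nonneg hc.le (hy0 i),
        by rw [← Finset.mul_sum, hy1, mul_one], ?_⟩
      dsimp only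
      have hΩarg : Ω (fun i => c * y i) = Ω (c • y) := rfl
      rw [hΩarg, mul_sub, Finset.mul_sum]
      congr 1
      · refine Finset.sum_congr rfl fun i _ => ?_
        ring
      · field_simp
  have hAbdd : BddAbove A := by
    obtain ⟨B, hB⟩ := hbdd
    refine ⟨B / c, fun u hu => ?_⟩
    have hmemI : c * u ∈ (fun v => c * v) '' A := ⟨u, hu, rfl⟩
    rw [← himg] at hmemI
    have hBu := hB hmemI
    rw [le_div_iff₀ hc, mul_comm]
    exact hBu
  have hMR : maxReg (fun y => 1 / c * Ω (c • y)) x = sSup A := rfl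
  rw [hMR, himg, csSup_mul_image c hc A hAne hAbdd]

theorem semi_dual_conjugate {m n : ℕ}
    (b : Fin n → ℝ) (C : Matrix (Fin m) (Fin n) ℝ) (α : Fin m → ℝ)
    (hb0 : ∀ j, 0 < b j) (hb1 : ∑ j, b j = 1)
    (Ω : (Fin m → ℝ) → ℝ) (γ : ℝ) (hγ : 0 < γ)
    (hΩ : StrongConvexOn {y : Fin m → ℝ | ∀ i, 0 ≤ y i} γ Ω) :
    sSup {v : ℝ | ∃ a : Fin m → ℝ, (∀ i, 0 ≤ a i) ∧ (∑ i, a i = 1) ∧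
        v = (∑ i, α i * a i) - OTreg C Ω a b} =
      ∑ j, b j * maxReg (fun y => 1 / b j * Ω (b j • y)) (fun i => α i - C i j) := by
  rcases Nat.eq_zero_or_pos m with hm | hm
  · subst hm
    have h1 : {v : ℝ | ∃ a : Fin 0 → ℝ, (∀ i, 0 ≤ a i) ∧ (∑ i, a i = 1) ∧
        v = (∑ i, α i * a i) - OTreg C Ω a b} = ∅ := by
      ext v; simp
    have h2 : ∀ j, maxReg (fun y => 1 / b j * Ω (b j • y)) (fun i => α i - C i j) = 0 := by
      intro j
      have he : {v : ℝ | ∃ y : Fin 0 → ℝ, (∀ i, 0 ≤ y i) ∧ (∑ i, y i = 1) ∧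
          v = (∑ i, y i * (α i - C i j)) - 1 / b j * Ω (b j • y)} = ∅ := by
        ext v; simp
      rw [maxReg, he, Real.sSup_empty]
    rw [h1, Real.sSup_empty]
    exact (Finset.sum_eq_zero fun j _ => by rw [h2 j, mul_zero]).symm
  · have hmR : (0:ℝ) < (m:ℝ) := by exact_mod_cast hm
    have hmne : (m:ℝ) ≠ 0 := hmR.ne'
    have hconv : ConvexOn ℝ {y : Fin m → ℝ | ∀ i, 0 ≤ y i} Ω :=
      hΩ.convexOn (fun r => by dsimp; positivity)
    set S : Fin n → Set ℝ := fun j => {v : ℝ | ∃ t : Fin m → ℝ, (∀ i, 0 ≤ t i) ∧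
      (∑ i, t i = b j) ∧ v = (∑ i, t i * (α i - C i j)) - Ω t} with hSdef
    have hSne : ∀ j, (S j).Nonempty := by
      intro j
      refine ⟨_, fun _ => b j / (m:ℝ), fun i => div_nonneg (hb0 j).le (Nat.cast_nonneg m), ?_, rfl⟩
      rw [Finset.sum_const, Finset.card_univ, Fintype.card_fin, nsmul_eq_mul]
      field_simp
    have hSbdd : ∀ j, BddAbove (S j) := by
      intro j
      obtain ⟨L, hL⟩ := omega_lowerBound hm hconv (hb0 j)
      refine ⟨(∑ i, b j * |α i - C i j|) - L, ?_⟩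
      rintro v ⟨t, ht0, htsum, rfl⟩
      have h1 : ∑ i, t i * (α i - C i j) ≤ ∑ i, b j * |α i - C i j| := by
        refine Finset.sum_le_sum fun i _ => ?_
        calc t i * (α i - C i j) ≤ t i * |α i - C i j| :=
              mul_le_mul_of_nonneg_left (le_abs_self _) (ht0 i)
          _ ≤ b j * |α i - C i j| := by
              refine mul_le_mul_of_nonneg_right ?_ (abs_nonneg _)
              exact htsum ▸ Finset.single_le_sum (fun k _ => ht0 k) (Finset.mem_univ i)
      have h2 := hL t ht0 htsum
      linarith
    -- key algebraic identity
    have halg : ∀ (T : Matrix (Fin m) (Fin n) ℝ),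
        (∑ i, α i * (∑ j, T i j)) -
          ((∑ i, ∑ j, T i j * C i j) + ∑ j, Ω (fun i => T i j))
        = ∑ j, ((∑ i, T i j * (α i - C i j)) - Ω (fun i => T i j)) := by
      intro T
      have eα : (∑ i, α i * (∑ j, T i j)) = ∑ j, ∑ i, T i j * α i := by
        simp_rw [Finset.mul_sum]
        rw [Finset.sum_comm]
        exact Finset.sum_congr rfl fun j _ => Finset.sum_congr rfl fun i _ => mul_comm _ _
      have eC : (∑ i, ∑ j, T i j * C i j) = ∑ j, ∑ i, T i j * C i j := Finset.sum_comm
      simp only [mul_sub, Finset.sum_sub_distrib]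
      rw [eα, eC]
      ring
    -- lower bound on feasible values
    have hDlb : ∀ (a : Fin m → ℝ), (∀ i, 0 ≤ a i) → (∑ i, a i = 1) →
        ∀ w ∈ {v : ℝ | ∃ T : Matrix (Fin m) (Fin n) ℝ,
          (∀ i j, 0 ≤ T i j) ∧ (∀ i, ∑ j, T i j = a i) ∧ (∀ j, ∑ i, T i j = b j) ∧
          v = (∑ i, ∑ j, T i j * C i j) + ∑ j, Ω (fun i => T i j)},
        (∑ i, α i * a i) - ∑ j, sSup (S j) ≤ w := by
      rintro a ha0 ha1 w ⟨T, hT0, hTrow, hTcol, rfl⟩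
      have hterm : ∀ j, (∑ i, T i j * (α i - C i j)) - Ω (fun i => T i j) ≤ sSup (S j) :=
        fun j => le_csSup (hSbdd j) ⟨fun i => T i j, fun i => hT0 i j, hTcol j, rfl⟩
      have hsum : ∑ j, ((∑ i, T i j * (α i - C i j)) - Ω fun i => T i j) ≤ ∑ j, sSup (S j) :=
        Finset.sum_le_sum fun j _ => hterm j
      have haa : ∑ i, α i * a i = ∑ i, α i * (∑ j, T i j) :=
        Finset.sum_congr rfl fun i _ => by rw [hTrow i]
      have halgT := halg T
      rw [← haa] at halgT
      linarith
    have hDne : ∀ (a : Fin m → ℝ), (∀ i, 0 ≤ a i) → (∑ i, a i = 1) →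
        Set.Nonempty {v : ℝ | ∃ T : Matrix (Fin m) (Fin n) ℝ,
          (∀ i j, 0 ≤ T i j) ∧ (∀ i, ∑ j, T i j = a i) ∧ (∀ j, ∑ i, T i j = b j) ∧
          v = (∑ i, ∑ j, T i j * C i j) + ∑ j, Ω (fun i => T i j)} := by
      intro a ha0 ha1
      refine ⟨_, fun i j => a i * b j, fun i j => mul_nonneg (ha0 i) (hb0 j).le,
        fun i => by rw [← Finset.mul_sum, hb1, mul_one],
        fun j => by rw [← Finset.sum_mul, ha1, one_mul], rfl⟩
    have hPub : ∀ v ∈ {v : ℝ | ∃ a : Fin m → ℝ, (∀ i, 0 ≤ a i) ∧ (∑ i, a i = 1) ∧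
        v = (∑ i, α i * a i) - OTreg C Ω a b}, v ≤ ∑ j, sSup (S j) := by
      rintro v ⟨a, ha0, ha1, rfl⟩
      have h1 : (∑ i, α i * a i) - ∑ j, sSup (S j) ≤ OTreg C Ω a b :=
        le_csInf (hDne a ha0 ha1) (hDlb a ha0 ha1)
      linarith
    have hPne : Set.Nonempty {v : ℝ | ∃ a : Fin m → ℝ, (∀ i, 0 ≤ a i) ∧ (∑ i, a i = 1) ∧
        v = (∑ i, α i * a i) - OTreg C Ω a b} := by
      refine ⟨_, fun _ => 1/(m:ℝ), fun i => by positivity, ?_, rfl⟩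
      rw [Finset.sum_const, Finset.card_univ, Fintype.card_fin, nsmul_eq_mul]
      field_simp
    have hPbdd : BddAbove {v : ℝ | ∃ a : Fin m → ℝ, (∀ i, 0 ≤ a i) ∧ (∑ i, a i = 1) ∧
        v = (∑ i, α i * a i) - OTreg C Ω a b} := ⟨∑ j, sSup (S j), hPub⟩
    have hge : ∑ j, sSup (S j) ≤ sSup {v : ℝ | ∃ a : Fin m → ℝ, (∀ i, 0 ≤ a i) ∧
        (∑ i, a i = 1) ∧ v = (∑ i, α i * a i) - OTreg C Ω a b} := by
      apply sum_sSup_le S _ hSne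
      intro f hf
      simp only [hSdef, Set.mem_setOf_eq] at hf
      choose t ht0 htsum hteq using hf
      set a : Fin m → ℝ := fun i => ∑ j, t j i with hadef
      have ha0 : ∀ i, 0 ≤ a i := fun i => Finset.sum_nonneg fun j _ => ht0 j i
      have ha1 : ∑ i, a i = 1 := by
        calc ∑ i, a i = ∑ i, ∑ j, t j i := rfl
          _ = ∑ j, ∑ i, t j i := Finset.sum_comm
          _ = ∑ j, b j := Finset.sum_congr rfl fun j _ => htsum j
          _ = 1 := hb1
      have hobj : OTreg C Ω a b ≤
          (∑ i, ∑ j, t j i * C i j) + ∑ j, Ω (t j) := by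
        apply csInf_le
        · exact ⟨(∑ i, α i * a i) - ∑ j, sSup (S j), fun w hw => hDlb a ha0 ha1 w hw⟩
        · exact ⟨fun i j => t j i, fun i j => ht0 j i, fun i => rfl, fun j => htsum j, rfl⟩
      have hvP : ((∑ i, α i * a i) - OTreg C Ω a b) ∈ {v : ℝ | ∃ a : Fin m → ℝ,
          (∀ i, 0 ≤ a i) ∧ (∑ i, a i = 1) ∧ v = (∑ i, α i * a i) - OTreg C Ω a b} :=
        ⟨a, ha0, ha1, rfl⟩
      have h2 := le_csSup hPbdd hvP
      have halgT : (∑ i, α i * a i) - ((∑ i, ∑ j, t j i * C i j) + ∑ j, Ω (t j))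
          = ∑ j, ((∑ i, t j i * (α i - C i j)) - Ω (t j)) := halg (fun i j => t j i)
      have h3 : ∑ j, f j = ∑ j, ((∑ i, t j i * (α i - C i j)) - Ω (t j)) :=
        Finset.sum_congr rfl fun j _ => hteq j
      linarith
    have hmain : sSup {v : ℝ | ∃ a : Fin m → ℝ, (∀ i, 0 ≤ a i) ∧ (∑ i, a i = 1) ∧
        v = (∑ i, α i * a i) - OTreg C Ω a b} = ∑ j, sSup (S j) :=
      le_antisymm (csSup_le hPne hPub) hge
    rw [hmain]
    refine Finset.sum_congr rfl fun j _ => ?_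
    exact (maxReg_scaled hm Ω (b j) (hb0 j) (fun i => α i - C i j) (hSbdd j)).symm
end

section
/- Dual-variable bound: if (α, β) ∈ ℝ^m × ℝ^n satisfy α_i + β_j ≤ C_{ij} for all i,j, αᵀ1_m = 0, and αᵀa + βᵀb ≥ 0, then ‖α‖₁ ≤ 2‖C‖_∞ · max_i (1/a_i). -/
open Finset

theorem dual_variable_bound {m n : ℕ}
    (a : Fin m → ℝ) (b : Fin n → ℝ) (C : Matrix (Fin m) (Fin n) ℝ)
    (α : Fin m → ℝ) (β : Fin n → ℝ)
    (ha0 : ∀ i, 0 < a i) (ha1 : ∑ i, a i = 1)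
    (hb0 : ∀ j, 0 < b j) (hb1 : ∑ j, b j = 1)
    (hfeas : ∀ i j, α i + β j ≤ C i j)
    (hα0 : ∑ i, α i = 0)
    (hpos : 0 ≤ (∑ i, α i * a i) + ∑ j, β j * b j) :
    ∑ i, |α i| ≤ 2 * (⨆ i, ⨆ j, |C i j|) * ⨆ i, 1 / a i := by
  have hm : Nonempty (Fin m) := by
    rcases Nat.eq_zero_or_pos m with h | h
    · subst h; simp at ha1
    · exact ⟨⟨0, h⟩⟩
  have hn : Nonempty (Fin n) := by
    rcases Nat.eq_zero_or_pos n with h | h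
    · subst h; simp at hb1
    · exact ⟨⟨0, h⟩⟩
  set M := ⨆ i, ⨆ j, |C i j| with hMdef
  set K := ⨆ i, 1 / a i with hKdef
  have hMC : ∀ i j, |C i j| ≤ M := by
    intro i j
    have h1 : |C i j| ≤ ⨆ j, |C i j| :=
      le_ciSup (f := fun j => |C i j|) (Set.Finite.bddAbove (Set.finite_range _)) j
    exact h1.trans (le_ciSup (f := fun i => ⨆ j, |C i j|) (Set.Finite.bddAbove (Set.finite_range _)) i)
  have hKa : ∀ i, 1 / a i ≤ K := fun i =>
    le_ciSup (f := fun i => 1 / a i) (Set.Finite.bddAbove (Set.finite_range _)) i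
  obtain ⟨i₀, hi₀⟩ := Finite.exists_max α
  have hK0 : 0 ≤ K := by
    have := hKa i₀
    have := ha0 i₀
    have : (0:ℝ) ≤ 1 / a i₀ := by positivity
    linarith [hKa i₀]
  have hmpos : (0:ℝ) < m := by exact_mod_cast Fin.pos i₀
  have hmx0 : 0 ≤ α i₀ := by
    by_contra h
    push_neg at h
    have h1 : ∑ i, α i ≤ ∑ _i : Fin m, α i₀ := Finset.sum_le_sum fun i _ => hi₀ i
    rw [Finset.sum_const, Finset.card_univ, Fintype.card_fin, hα0] at h1
    have : (m : ℝ) * α i₀ < 0 := mul_neg_of_pos_of_neg hmpos h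
    rw [nsmul_eq_mul] at h1
    linarith
  have hT : ∑ j, β j * b j ≤ M - α i₀ := by
    calc ∑ j, β j * b j ≤ ∑ j, (M - α i₀) * b j := by
          apply Finset.sum_le_sum
          intro j _
          have h1 : α i₀ + β j ≤ C i₀ j := hfeas i₀ j
          have h2 : C i₀ j ≤ M := (le_abs_self _).trans (hMC i₀ j)
          have h3 := (hb0 j).le
          nlinarith
      _ = M - α i₀ := by rw [← Finset.mul_sum, hb1, mul_one]
  have hmax : ∀ x : ℝ, max (-x) 0 = max x 0 - x := by
    intro x
    rcases le_total 0 x with h | h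
    · rw [max_eq_right (neg_nonpos.mpr h), max_eq_left h]; ring
    · rw [max_eq_left (neg_nonneg.mpr h), max_eq_right h]; ring
  have hkey : ∑ i, a i * max (-(α i)) 0 ≤ M := by
    have e1 : ∑ i, a i * max (-(α i)) 0
        = ∑ i, a i * max (α i) 0 - ∑ i, α i * a i := by
      rw [← Finset.sum_sub_distrib]
      apply Finset.sum_congr rfl
      intro i _
      rw [hmax]; ring
    have e2 : ∑ i, a i * max (α i) 0 ≤ α i₀ := by
      calc ∑ i, a i * max (α i) 0 ≤ ∑ i, a i * α i₀ := by
            apply Finset.sum_le_sum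
            intro i _
            exact mul_le_mul_of_nonneg_left (max_le (hi₀ i) hmx0) (ha0 i).le
        _ = α i₀ := by rw [← Finset.sum_mul, ha1, one_mul]
    rw [e1]
    linarith
  have habs : ∀ x : ℝ, |x| = x + 2 * max (-x) 0 := by
    intro x
    rcases le_total 0 x with h | h
    · rw [abs_of_nonneg h, max_eq_right (neg_nonpos.mpr h)]; ring
    · rw [abs_of_nonpos h, max_eq_left (neg_nonneg.mpr h)]; ring
  calc ∑ i, |α i| = ∑ i, (α i + 2 * max (-(α i)) 0) :=
        Finset.sum_congr rfl fun i _ => habs (α i)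
    _ = 2 * ∑ i, max (-(α i)) 0 := by
        rw [Finset.sum_add_distrib, hα0, ← Finset.mul_sum]; ring
    _ ≤ 2 * ∑ i, K * (a i * max (-(α i)) 0) := by
        apply mul_le_mul_of_nonneg_left _ (by norm_num)
        apply Finset.sum_le_sum
        intro i _
        have hai := ha0 i
        have h1 : max (-(α i)) 0 = (1 / a i) * (a i * max (-(α i)) 0) := by
          field_simp
        nth_rewrite 1 [h1]
        exact mul_le_mul_of_nonneg_right (hKa i)
          (mul_nonneg hai.le (le_max_right _ _))
    _ = 2 * K * ∑ i, a i * max (-(α i)) 0 := by rw [← Finset.mul_sum]; ring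
    _ ≤ 2 * M * K := by nlinarith [hkey, hK0]
end

section
/- Semi-relaxed approximation error: with Φ(x,y) = (1/(2γ))‖x-y‖², the semi-relaxed OT satisfies 0 ≤ OT(a,b) - ÕT_Φ(a,b) ≤ 2γ‖C‖²_∞ · (max_i 1/a_i)², where ÕT_Φ(a,b) = min_{T≥0, Tᵀ1_m=b} ⟨T,C⟩ + (1/(2γ))‖T1_n - a‖². -/
/-!
Every coupling is feasible for the relaxed problem with zero penalty, so the relaxed value is
at most `OT(a, b)`. Conversely, a relaxed plan `T` with row-sum error `x = T 1 - a` can be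
rounded to a coupling at extra cost at most `‖C‖_∞ ‖x‖₁`: scale each row down to at most `a i`,
then fill the remaining row and column deficits with a rank-one plan. By Cauchy–Schwarz and
AM-GM, `‖C‖_∞ ‖x‖₁ ≤ ‖x‖₂² / (2γ) + γ m ‖C‖²_∞ / 2`, and `m ≤ max_i 1 / a i` because `a` is a
probability vector.
-/

open Finset

lemma sInf_sub_sInf_mem_Icc {A B : Set ℝ} {c : ℝ} (hc : 0 ≤ c) (hB : BddBelow B)
    (hAB : ∀ x ∈ A, ∃ y ∈ B, y ≤ x) (hBA : ∀ y ∈ B, ∃ x ∈ A, x ≤ y + c) :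
    0 ≤ sInf A - sInf B ∧ sInf A - sInf B ≤ c := by
  obtain ⟨l, hl⟩ := hB
  have hA : BddBelow A := ⟨l, fun x hx => by
    obtain ⟨y, hy, hyx⟩ := hAB x hx
    exact (hl hy).trans hyx⟩
  rcases B.eq_empty_or_nonempty with rfl | hBne
  · have : A = ∅ := Set.eq_empty_of_forall_notMem fun x hx => by simpa using hAB x hx
    simp [this, hc]
  obtain ⟨x₀, hx₀, -⟩ := hBA _ hBne.some_mem
  constructor
  · refine sub_nonneg.2 (le_csInf ⟨x₀, hx₀⟩ fun x hx => ?_)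
    obtain ⟨y, hy, hyx⟩ := hAB x hx
    exact (csInf_le ⟨l, hl⟩ hy).trans hyx
  · refine sub_le_comm.2 (le_csInf hBne fun y hy => ?_)
    obtain ⟨x, hx, hxy⟩ := hBA y hy
    linarith [csInf_le hA hx]

lemma natCast_card_le_iSup_one_div {ι : Type*} [Fintype ι] {a : ι → ℝ} (ha0 : ∀ i, 0 < a i)
    (ha1 : ∑ i, a i = 1) : (Fintype.card ι : ℝ) ≤ ⨆ i, 1 / a i := by
  set M := ⨆ i, 1 / a i
  have h : ∀ i, 1 ≤ M * a i := fun i =>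
    (div_le_iff₀ (ha0 i)).1 (le_ciSup (Finite.bddAbove_range fun i => 1 / a i) i)
  calc (Fintype.card ι : ℝ) = ∑ _i : ι, (1 : ℝ) := by simp
    _ ≤ ∑ i, M * a i := sum_le_sum fun i _ => h i
    _ = M := by rw [← mul_sum, ha1, mul_one]

lemma mul_sum_abs_le_sum_sq_add {ι : Type*} [Fintype ι] (x : ι → ℝ) {γ : ℝ} (hγ : 0 < γ)
    (K : ℝ) :
    K * ∑ i, |x i| ≤ 1 / (2 * γ) * ∑ i, x i ^ 2 + γ * Fintype.card ι * K ^ 2 / 2 := by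
  set s := ∑ i, |x i|
  set q := ∑ i, x i ^ 2
  set m : ℝ := (Fintype.card ι : ℝ)
  rcases isEmpty_or_nonempty ι with hι | hι
  · simp [s, q, m]
  have hm : 0 < m := Nat.cast_pos.2 Fintype.card_pos
  have hCS : s ^ 2 ≤ m * q := by
    have h := sq_sum_le_card_mul_sum_sq (s := univ) (f := fun i => |x i|)
    simp only [sq_abs, card_univ] at h
    exact h
  -- AM-GM for `s` and `γ m K`, after multiplying through by `m`
  have key : 2 * γ * (K * s) ≤ q + γ ^ 2 * m * K ^ 2 := by
    nlinarith [sq_nonneg (s - γ * m * K)]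
  rw [div_mul_eq_mul_div, one_mul, div_add' _ _ _ (by positivity), le_div_iff₀ (by positivity)]
  nlinarith

lemma exists_le_of_rowSum_eq_min {ι κ : Type*} [Fintype κ] {a : ι → ℝ} (ha : ∀ i, 0 ≤ a i)
    {T : Matrix ι κ ℝ} (hT : ∀ i j, 0 ≤ T i j) :
    ∃ T' : Matrix ι κ ℝ, (∀ i j, 0 ≤ T' i j) ∧ (∀ i j, T' i j ≤ T i j) ∧
      ∀ i, ∑ j, T' i j = min (∑ j, T i j) (a i) := by
  set r := fun i => ∑ j, T i j
  have hr : ∀ i, 0 ≤ r i := fun i => sum_nonneg fun j _ => hT i j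
  have hcoef0 : ∀ i, 0 ≤ min (r i) (a i) / r i := fun i =>
    div_nonneg (le_min (hr i) (ha i)) (hr i)
  have hcoef1 : ∀ i, min (r i) (a i) / r i ≤ 1 := fun i =>
    div_le_one_of_le₀ (min_le_left _ _) (hr i)
  refine ⟨fun i j => min (r i) (a i) / r i * T i j, fun i j => mul_nonneg (hcoef0 i) (hT i j),
    fun i j => mul_le_of_le_one_left (hT i j) (hcoef1 i), fun i => ?_⟩
  rw [← mul_sum]
  rcases (hr i).eq_or_lt with h | h
  · simp [r, ← h, min_eq_left (ha i)]
  · exact div_mul_cancel₀ _ h.ne'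

section Rounding

variable {ι κ : Type*} [Fintype ι] [Fintype κ]

lemma exists_marginals_cost_le {d : ι → ℝ} {e : κ → ℝ} (hd : ∀ i, 0 ≤ d i) (he : ∀ j, 0 ≤ e j)
    (hde : ∑ i, d i = ∑ j, e j) (C : Matrix ι κ ℝ) {K : ℝ} (hCK : ∀ i j, C i j ≤ K) :
    ∃ R : Matrix ι κ ℝ, (∀ i j, 0 ≤ R i j) ∧ (∀ i, ∑ j, R i j = d i) ∧
      (∀ j, ∑ i, R i j = e j) ∧ ∑ i, ∑ j, R i j * C i j ≤ K * ∑ i, d i := by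
  set Δ := ∑ i, d i
  have hΔ : 0 ≤ Δ := sum_nonneg fun i _ => hd i
  have hR : ∀ i j, 0 ≤ d i * e j / Δ := fun i j => div_nonneg (mul_nonneg (hd i) (he j)) hΔ
  -- when `Δ = 0` both `d` and `e` vanish, so the junk value `x / 0 = 0` is harmless
  have hd_div : ∀ i, d i * Δ / Δ = d i := fun i => by
    rcases hΔ.eq_or_lt with h | h
    · simp [(sum_eq_zero_iff_of_nonneg fun i _ => hd i).1 h.symm i]
    · exact mul_div_cancel_right₀ _ h.ne'
  have he_div : ∀ j, Δ * e j / Δ = e j := fun j => by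
    rcases hΔ.eq_or_lt with h | h
    · simp [(sum_eq_zero_iff_of_nonneg fun j _ => he j).1 (hde.symm.trans h.symm) j]
    · exact mul_div_cancel_left₀ _ h.ne'
  have hrow : ∀ i, ∑ j, d i * e j / Δ = d i := fun i => by
    rw [← sum_div, ← mul_sum, ← hde, hd_div]
  refine ⟨fun i j => d i * e j / Δ, hR, hrow,
    fun j => by rw [← sum_div, ← sum_mul, he_div], ?_⟩
  calc ∑ i, ∑ j, d i * e j / Δ * C i j ≤ ∑ i, ∑ j, d i * e j / Δ * K :=
        sum_le_sum fun i _ => sum_le_sum fun j _ =>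
          mul_le_mul_of_nonneg_left (hCK i j) (hR i j)
    _ = K * Δ := by simp_rw [← sum_mul, hrow]; exact mul_comm _ _

lemma exists_coupling_cost_le_add_sum_abs {a : ι → ℝ} {b : κ → ℝ} (ha : ∀ i, 0 ≤ a i)
    (hab : ∑ i, a i = ∑ j, b j) {C : Matrix ι κ ℝ} (hC : ∀ i j, 0 ≤ C i j) {K : ℝ}
    (hK0 : 0 ≤ K) (hCK : ∀ i j, C i j ≤ K) {T : Matrix ι κ ℝ} (hT : ∀ i j, 0 ≤ T i j)
    (hTcol : ∀ j, ∑ i, T i j = b j) :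
    ∃ U : Matrix ι κ ℝ,
      (∀ i j, 0 ≤ U i j) ∧ (∀ i, ∑ j, U i j = a i) ∧ (∀ j, ∑ i, U i j = b j) ∧
      ∑ i, ∑ j, U i j * C i j ≤
        ∑ i, ∑ j, T i j * C i j + K * ∑ i, |∑ j, T i j - a i| := by
  obtain ⟨T', hT'0, hT'T, hT'row⟩ := exists_le_of_rowSum_eq_min ha hT
  set d := fun i => a i - min (∑ j, T i j) (a i)
  set e := fun j => b j - ∑ i, T' i j
  have hd : ∀ i, 0 ≤ d i := fun i => sub_nonneg.2 (min_le_right _ _)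
  have he : ∀ j, 0 ≤ e j := fun j =>
    sub_nonneg.2 (hTcol j ▸ sum_le_sum fun i _ => hT'T i j)
  have hde : ∑ i, d i = ∑ j, e j := by
    simp only [d, e, sum_sub_distrib, hab, ← hT'row]
    rw [sum_comm]
  obtain ⟨R, hR0, hRrow, hRcol, hRcost⟩ := exists_marginals_cost_le hd he hde C hCK
  have hd_le : ∀ i, d i ≤ |∑ j, T i j - a i| := fun i => by
    rcases min_cases (∑ j, T i j) (a i) with ⟨h, _⟩ | ⟨h, _⟩ <;>
      simp only [d, h, sub_self, abs_nonneg, abs_sub_comm, le_abs_self]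
  refine ⟨T' + R, fun i j => add_nonneg (hT'0 i j) (hR0 i j), fun i => ?_, fun j => ?_, ?_⟩
  · simp [sum_add_distrib, hT'row, hRrow, d]
  · simp [sum_add_distrib, hRcol, e]
  calc ∑ i, ∑ j, (T' + R) i j * C i j
      = ∑ i, ∑ j, T' i j * C i j + ∑ i, ∑ j, R i j * C i j := by
        simp only [Matrix.add_apply, add_mul, sum_add_distrib]
    _ ≤ ∑ i, ∑ j, T i j * C i j + K * ∑ i, |∑ j, T i j - a i| := by
        gcongr with i _ j _ i
        · exact hC i j
        · exact hT'T i j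
        · exact hRcost.trans (mul_le_mul_of_nonneg_left (sum_le_sum fun i _ => hd_le i) hK0)

theorem semi_relaxed_approx_error_general {m n : ℕ}
    (a : Fin m → ℝ) (b : Fin n → ℝ) (C : Matrix (Fin m) (Fin n) ℝ) (γ : ℝ)
    (hγ : 0 < γ)
    (ha0 : ∀ i, 0 < a i) (ha1 : ∑ i, a i = 1)
    (hb1 : ∑ j, b j = 1)
    (hC : ∀ i j, 0 ≤ C i j) :
    0 ≤ sInf {v : ℝ | ∃ T : Matrix (Fin m) (Fin n) ℝ,
          (∀ i j, 0 ≤ T i j) ∧ (∀ i, ∑ j, T i j = a i) ∧ (∀ j, ∑ i, T i j = b j) ∧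
          v = ∑ i, ∑ j, T i j * C i j} -
        sInf {w : ℝ | ∃ T : Matrix (Fin m) (Fin n) ℝ,
          (∀ i j, 0 ≤ T i j) ∧ (∀ j, ∑ i, T i j = b j) ∧
          w = (∑ i, ∑ j, T i j * C i j) +
            1 / (2 * γ) * ∑ i, ((∑ j, T i j) - a i) ^ 2} ∧
    sInf {v : ℝ | ∃ T : Matrix (Fin m) (Fin n) ℝ,
          (∀ i j, 0 ≤ T i j) ∧ (∀ i, ∑ j, T i j = a i) ∧ (∀ j, ∑ i, T i j = b j) ∧
          v = ∑ i, ∑ j, T i j * C i j} -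
        sInf {w : ℝ | ∃ T : Matrix (Fin m) (Fin n) ℝ,
          (∀ i j, 0 ≤ T i j) ∧ (∀ j, ∑ i, T i j = b j) ∧
          w = (∑ i, ∑ j, T i j * C i j) +
            1 / (2 * γ) * ∑ i, ((∑ j, T i j) - a i) ^ 2} ≤
      2 * γ * (⨆ i, ⨆ j, C i j) ^ 2 * (⨆ i, 1 / a i) ^ 2 := by
  set K := ⨆ i, ⨆ j, C i j
  have hCK : ∀ i j, C i j ≤ K := fun i j =>
    le_ciSup_of_le (Finite.bddAbove_range _) i (le_ciSup (Finite.bddAbove_range _) j)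
  have hK0 : 0 ≤ K := Real.iSup_nonneg fun i => Real.iSup_nonneg (hC i)
  have hm : (m : ℝ) ≤ (⨆ i, 1 / a i) ^ 2 := by
    have h := natCast_card_le_iSup_one_div ha0 ha1
    rw [Fintype.card_fin] at h
    calc (m : ℝ) ≤ m * m := by exact_mod_cast Nat.le_mul_self m
      _ ≤ _ := by rw [sq]; exact mul_le_mul h h (Nat.cast_nonneg m) ((Nat.cast_nonneg m).trans h)
  refine sInf_sub_sInf_mem_Icc (by positivity) ⟨0, ?_⟩ ?_ ?_
  · rintro _ ⟨T, hT, -, rfl⟩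
    exact add_nonneg (sum_nonneg fun i _ => sum_nonneg fun j _ => mul_nonneg (hT i j) (hC i j))
      (mul_nonneg (by positivity) (sum_nonneg fun i _ => sq_nonneg _))
  · rintro _ ⟨T, hT, hrow, hcol, rfl⟩
    exact ⟨_, ⟨T, hT, hcol, rfl⟩, by simp [hrow]⟩
  · rintro _ ⟨T, hT, hcol, rfl⟩
    obtain ⟨U, hU, hUrow, hUcol, hUcost⟩ := exists_coupling_cost_le_add_sum_abs
      (fun i => (ha0 i).le) (by rw [ha1, hb1]) hC hK0 hCK hT hcol
    refine ⟨_, ⟨U, hU, hUrow, hUcol, rfl⟩, ?_⟩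
    have hpen := mul_sum_abs_le_sum_sq_add (fun i => ∑ j, T i j - a i) hγ K
    rw [Fintype.card_fin] at hpen
    have hγK : 0 ≤ γ * K ^ 2 := by positivity
    linarith [mul_le_mul_of_nonneg_left hm hγK, mul_nonneg hγK (sq_nonneg (⨆ i, 1 / a i))]

theorem semi_relaxed_approx_error {m n : ℕ}
    (a : Fin m → ℝ) (b : Fin n → ℝ) (C : Matrix (Fin m) (Fin n) ℝ) (γ : ℝ)
    (hγ : 0 < γ)
    (ha0 : ∀ i, 0 < a i) (ha1 : ∑ i, a i = 1)
    (hb0 : ∀ j, 0 < b j) (hb1 : ∑ j, b j = 1)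
    (hC : ∀ i j, 0 ≤ C i j) :
    0 ≤ sInf {v : ℝ | ∃ T : Matrix (Fin m) (Fin n) ℝ,
          (∀ i j, 0 ≤ T i j) ∧ (∀ i, ∑ j, T i j = a i) ∧ (∀ j, ∑ i, T i j = b j) ∧
          v = ∑ i, ∑ j, T i j * C i j} -
        sInf {w : ℝ | ∃ T : Matrix (Fin m) (Fin n) ℝ,
          (∀ i j, 0 ≤ T i j) ∧ (∀ j, ∑ i, T i j = b j) ∧
          w = (∑ i, ∑ j, T i j * C i j) +
            1 / (2 * γ) * ∑ i, ((∑ j, T i j) - a i) ^ 2} ∧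
    sInf {v : ℝ | ∃ T : Matrix (Fin m) (Fin n) ℝ,
          (∀ i j, 0 ≤ T i j) ∧ (∀ i, ∑ j, T i j = a i) ∧ (∀ j, ∑ i, T i j = b j) ∧
          v = ∑ i, ∑ j, T i j * C i j} -
        sInf {w : ℝ | ∃ T : Matrix (Fin m) (Fin n) ℝ,
          (∀ i j, 0 ≤ T i j) ∧ (∀ j, ∑ i, T i j = b j) ∧
          w = (∑ i, ∑ j, T i j * C i j) +
            1 / (2 * γ) * ∑ i, ((∑ j, T i j) - a i) ^ 2} ≤
      2 * γ * (⨆ i, ⨆ j, C i j) ^ 2 * (⨆ i, 1 / a i) ^ 2 :=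
  semi_relaxed_approx_error_general a b C γ hγ ha0 ha1 hb1 hC
end Rounding
end
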